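/- Let K be an operator on H_L ⊗ H_R with operator Schmidt rank M (i.e., K = Σ_{j=1}^M X_j ⊗ Y_j), and let ρ = Σ_{i=1}^D p_i ρ_L^i ⊗ ρ_R^i be a separable state with Tr(KρK†) > 0. Then there exist density matrices τ_L, τ_R such that KρK† / Tr(KρK†) ⪯ (DM)² (τ_L ⊗ τ_R). -/

import Mathlib

/-!
Write `ρL i = sL i * (sL i)ᴴ`, `ρR i = sR i * (sR i)ᴴ`, so that `KρKᴴ = ∑ᵢ pᵢ Wᵢ Wᵢᴴ` with
`Wᵢ = K (sL i ⊗ sR i) = ∑_{k<M} aᵢₖ ⊗ bᵢₖ`; after a unitary change of the index `k` the `bᵢₖ` are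
Hilbert–Schmidt orthogonal. Cauchy–Schwarz in the Loewner order gives
`Wᵢ Wᵢᴴ ⪯ M ∑ₖ aᵢₖaᵢₖᴴ ⊗ bᵢₖbᵢₖᴴ`, while orthogonality gives `Tr Wᵢ Wᵢᴴ = ∑ₖ ‖aᵢₖ‖² ‖bᵢₖ‖²`.
Rescaling every product term so that both factors have trace `eᵢₖ = √pᵢ ‖aᵢₖ‖ ‖bᵢₖ‖` and using
`∑ S_q ⊗ T_q ⪯ (∑ S_q) ⊗ (∑ T_q)` for positive `S_q, T_q` yields `KρKᴴ ⪯ M (σL ⊗ σR)` with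
`Tr σL = Tr σR = ∑ eᵢₖ`, and `(∑ eᵢₖ)² ≤ DM Tr(KρKᴴ)` by Cauchy–Schwarz once more.
Normalising `σL`, `σR` to states gives the bound `DM² ≤ (DM)²`.
-/

open Matrix ComplexOrder Kronecker
open Finset
open RCLike (re)
open scoped MatrixOrder

theorem Real.sqrt_div_mul_eq_sqrt_mul {a t : ℝ} (ht : 0 ≤ t) : √(a / t) * t = √(a * t) := by
  rcases ht.eq_or_lt with rfl | ht
  · simp
  rw [← Real.sqrt_sq ht.le, ← Real.sqrt_mul' _ (sq_nonneg t), Real.sqrt_sq ht.le]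
  congr 1
  field_simp

section StarOrderedRing

variable {R : Type*} [NonUnitalRing R] [PartialOrder R] [StarRing R] [StarOrderedRing R]

theorem mul_star_add_mul_star_le (a b : R) :
    a * star b + b * star a ≤ a * star a + b * star b := by
  have h := mul_star_self_nonneg (a - b)
  rw [star_sub, sub_mul, mul_sub, mul_sub] at h
  rw [← sub_nonneg]
  convert h using 1
  abel

theorem Finset.sum_mul_star_sum_le_card_nsmul {ι : Type*} (s : Finset ι) (f : ι → R) :
    (∑ i ∈ s, f i) * star (∑ i ∈ s, f i) ≤ #s • ∑ i ∈ s, f i * star (f i) := by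
  classical
  induction s using Finset.induction_on with
  | empty => simp
  | insert a s ha ih =>
    have cross : (∑ i ∈ s, f i) * star (f a) + f a * star (∑ i ∈ s, f i)
        ≤ ∑ i ∈ s, f i * star (f i) + #s • (f a * star (f a)) := by
      simpa [star_sum, sum_mul, mul_sum, sum_add_distrib] using
        sum_le_sum fun i (_ : i ∈ s) => mul_star_add_mul_star_le (f i) (f a)
    rw [sum_insert ha, sum_insert ha, card_insert_of_notMem ha, star_add, add_mul, mul_add,
      mul_add]
    calc _ = f a * star (f a) + ((∑ i ∈ s, f i) * star (f a) + f a * star (∑ i ∈ s, f i))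
          + (∑ i ∈ s, f i) * star (∑ i ∈ s, f i) := by abel
      _ ≤ f a * star (f a) + (∑ i ∈ s, f i * star (f i) + #s • (f a * star (f a)))
          + #s • ∑ i ∈ s, f i * star (f i) := by gcongr
      _ = _ := by rw [smul_add, succ_nsmul, succ_nsmul]; abel

end StarOrderedRing

namespace Matrix

section Kronecker

variable {α ι l m n p : Type*}

theorem sum_kronecker [NonUnitalNonAssocSemiring α] (s : Finset ι) (A : ι → Matrix l m α)
    (B : Matrix n p α) : (∑ i ∈ s, A i) ⊗ₖ B = ∑ i ∈ s, A i ⊗ₖ B := by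
  ext; simp [sum_apply, sum_mul]

theorem kronecker_sum [NonUnitalNonAssocSemiring α] (s : Finset ι) (A : Matrix l m α)
    (B : ι → Matrix n p α) : A ⊗ₖ (∑ i ∈ s, B i) = ∑ i ∈ s, A ⊗ₖ B i := by
  ext; simp [sum_apply, mul_sum]

theorem kronecker_sub [NonUnitalNonAssocRing α] (A : Matrix l m α) (B C : Matrix n p α) :
    A ⊗ₖ (B - C) = A ⊗ₖ B - A ⊗ₖ C := by
  ext; simp [mul_sub]

end Kronecker

variable {𝕜 : Type*} [RCLike 𝕜]

theorem exists_sum_kronecker_eq_and_pairwise_trace_mul_conjTranspose_eq_zero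
    {κ l l' r r' : Type*} [Fintype κ] [DecidableEq κ] [Fintype r] [Fintype r']
    (x : κ → Matrix l l' 𝕜) (y : κ → Matrix r r' 𝕜) :
    ∃ (a : κ → Matrix l l' 𝕜) (b : κ → Matrix r r' 𝕜), ∑ k, a k ⊗ₖ b k = ∑ k, x k ⊗ₖ y k ∧
      Pairwise fun k k' => (b k * (b k')ᴴ).trace = 0 := by
  set G : Matrix κ κ 𝕜 := .of fun j j' => (y j * (y j')ᴴ).trace
  have hG : G.IsHermitian := by
    ext j j'
    simp [G, ← trace_conjTranspose]
  set U : Matrix κ κ 𝕜 := (hG.eigenvectorUnitary : Matrix κ κ 𝕜)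
  have hU : U * star U = 1 := Unitary.mul_star_self_of_mem hG.eigenvectorUnitary.2
  have hdiag : star U * G * U = diagonal (RCLike.ofReal ∘ hG.eigenvalues) := by
    simpa [Unitary.conjStarAlgAut_star_apply] using hG.conjStarAlgAut_star_eigenvectorUnitary
  refine ⟨fun k => ∑ j, U j k • x j, fun k => ∑ j, star (U j k) • y j, ?_, fun k k' hkk' => ?_⟩
  · calc ∑ k, (∑ j, U j k • x j) ⊗ₖ ∑ j', star (U j' k) • y j'
        = ∑ j, ∑ j', (U * star U) j j' • (x j ⊗ₖ y j') := by
          simp only [sum_kronecker, kronecker_sum, smul_kronecker, kronecker_smul, smul_sum,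
            smul_smul, mul_apply, star_apply, sum_smul]
          rw [sum_comm_cycle]
          exact sum_congr rfl fun j _ => sum_comm.trans (by simp only [mul_comm])
      _ = ∑ k, x k ⊗ₖ y k := by simp [hU, one_apply]
  · have hGram : ((∑ j, star (U j k) • y j) * (∑ j', star (U j' k') • y j')ᴴ).trace =
        (star U * G * U) k k' := by
      simp only [conjTranspose_sum, conjTranspose_smul, Matrix.sum_mul, Matrix.mul_sum,
        Matrix.smul_mul, Matrix.mul_smul, trace_sum, trace_smul, mul_apply, star_apply,
        Finset.sum_mul, G, of_apply, smul_eq_mul, star_star, Finset.mul_sum]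
      exact sum_congr rfl fun _ _ => sum_congr rfl fun _ _ => by ring
    exact hGram.trans (by rw [hdiag, diagonal_apply_ne _ hkk'])

variable {m n : Type*} [Fintype m] [Fintype n]

theorem IsHermitian.ofReal_re_trace {A : Matrix n n 𝕜} (hA : A.IsHermitian) :
    ((re A.trace : ℝ) : 𝕜) = A.trace :=
  RCLike.conj_eq_iff_re.mp (by rw [← RCLike.star_def, ← trace_conjTranspose, hA.eq])

theorem re_trace_nonneg {A : Matrix n n 𝕜} (hA : 0 ≤ A) : 0 ≤ re A.trace :=
  (RCLike.nonneg_iff.mp hA.posSemidef.trace_nonneg).1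

theorem re_trace_pos {A : Matrix n n 𝕜} (hA : 0 ≤ A) (h : A ≠ 0) : 0 < re A.trace := by
  refine (re_trace_nonneg hA).lt_of_ne fun h0 => h ?_
  rw [← hA.posSemidef.trace_eq_zero_iff, ← hA.posSemidef.isHermitian.ofReal_re_trace, ← h0,
    RCLike.ofReal_zero]

theorem re_trace_le_re_trace {A B : Matrix n n 𝕜} (h : A ≤ B) : re A.trace ≤ re B.trace := by
  have := (RCLike.nonneg_iff.mp (le_iff.mp h).trace_nonneg).1
  rwa [trace_sub, map_sub, sub_nonneg] at this

theorem re_trace_smul (c : ℝ) (A : Matrix n n 𝕜) : re (c • A).trace = c * re A.trace := by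
  rw [trace_smul, RCLike.smul_re]

theorem exists_eq_mul_conjTranspose_of_nonneg {A : Matrix n n 𝕜} (hA : 0 ≤ A) :
    ∃ B : Matrix n n 𝕜, A = B * Bᴴ := by
  classical
  refine ⟨CFC.sqrt A, ?_⟩
  rw [← star_eq_conjTranspose, (CFC.sqrt_nonneg A).isSelfAdjoint.star_eq,
    CFC.sqrt_mul_sqrt_self A hA]

theorem kronecker_nonneg {A : Matrix m m 𝕜} {B : Matrix n n 𝕜} (hA : 0 ≤ A) (hB : 0 ≤ B) :
    0 ≤ A ⊗ₖ B :=
  (hA.posSemidef.kronecker hB.posSemidef).nonneg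

theorem kronecker_le_kronecker_left {A : Matrix m m 𝕜} {B C : Matrix n n 𝕜} (hA : 0 ≤ A)
    (h : B ≤ C) : A ⊗ₖ B ≤ A ⊗ₖ C := by
  rw [le_iff, ← kronecker_sub]
  exact hA.posSemidef.kronecker h

theorem sum_kronecker_le_kronecker_sum {ι : Type*} (s : Finset ι) {S : ι → Matrix m m 𝕜}
    {T : ι → Matrix n n 𝕜} (hS : ∀ i ∈ s, 0 ≤ S i) (hT : ∀ i ∈ s, 0 ≤ T i) :
    ∑ i ∈ s, S i ⊗ₖ T i ≤ (∑ i ∈ s, S i) ⊗ₖ ∑ i ∈ s, T i := by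
  rw [sum_kronecker]
  exact sum_le_sum fun i hi => kronecker_le_kronecker_left (hS i hi) (single_le_sum hT hi)

theorem smul_kronecker_eq_sqrt_smul_kronecker_sqrt_smul {P : Matrix m m 𝕜} {R : Matrix n n 𝕜}
    (hP : 0 ≤ P) (hR : 0 ≤ R) {w : ℝ} (hw : 0 ≤ w) :
    w • (P ⊗ₖ R) = (√(w * re R.trace / re P.trace) • P) ⊗ₖ
      (√(w * re P.trace / re R.trace) • R) := by
  rw [smul_kronecker, kronecker_smul, smul_smul]
  -- A vanishing trace makes a quotient junk (`x / 0 = 0`), but then `P = 0` or `R = 0`.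
  rcases eq_or_ne P 0 with rfl | hP0
  · simp
  rcases eq_or_ne R 0 with rfl | hR0
  · simp
  have ht := re_trace_pos hP hP0
  have hu := re_trace_pos hR hR0
  rw [← Real.sqrt_mul (by positivity), div_mul_div_comm, mul_mul_mul_comm,
    mul_comm (re R.trace), mul_div_assoc, div_self (by positivity), mul_one,
    Real.sqrt_mul_self hw]

theorem exists_sum_smul_kronecker_le_kronecker {ι : Type*} [Fintype ι] {P : ι → Matrix m m 𝕜}
    {R : ι → Matrix n n 𝕜} (hP : ∀ i, 0 ≤ P i) (hR : ∀ i, 0 ≤ R i) {w : ι → ℝ}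
    (hw : ∀ i, 0 ≤ w i) :
    ∃ A B, 0 ≤ A ∧ 0 ≤ B ∧ ∑ i, w i • (P i ⊗ₖ R i) ≤ A ⊗ₖ B ∧
      re A.trace = ∑ i, √(w i * re (P i).trace * re (R i).trace) ∧
      re B.trace = ∑ i, √(w i * re (P i).trace * re (R i).trace) := by
  set S := fun i => √(w i * re (R i).trace / re (P i).trace) • P i
  set T := fun i => √(w i * re (P i).trace / re (R i).trace) • R i
  have hS : ∀ i ∈ univ, 0 ≤ S i := fun i _ => smul_nonneg (Real.sqrt_nonneg _) (hP i)
  have hT : ∀ i ∈ univ, 0 ≤ T i := fun i _ => smul_nonneg (Real.sqrt_nonneg _) (hR i)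
  refine ⟨∑ i, S i, ∑ i, T i, sum_nonneg hS, sum_nonneg hT, ?_, ?_, ?_⟩
  · simp only [smul_kronecker_eq_sqrt_smul_kronecker_sqrt_smul (hP _) (hR _) (hw _)]
    exact sum_kronecker_le_kronecker_sum univ hS hT
  · simp only [S, trace_sum, map_sum, re_trace_smul,
      Real.sqrt_div_mul_eq_sqrt_mul (re_trace_nonneg (hP _)), mul_right_comm]
  · simp only [T, trace_sum, map_sum, re_trace_smul,
      Real.sqrt_div_mul_eq_sqrt_mul (re_trace_nonneg (hR _))]

theorem exists_le_smul_kronecker_of_le_kronecker {Q : Matrix (m × n) (m × n) 𝕜}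
    {A : Matrix m m 𝕜} {B : Matrix n n 𝕜} (hA : 0 ≤ A) (hB : 0 ≤ B) (hQ : Q ≤ A ⊗ₖ B)
    (hQ0 : 0 < re Q.trace) :
    ∃ τL τR, τL.PosSemidef ∧ τL.trace = 1 ∧ τR.PosSemidef ∧ τR.trace = 1 ∧
      Q ≤ (re A.trace * re B.trace) • (τL ⊗ₖ τR) := by
  set a := re A.trace
  set b := re B.trace
  have hAa : (a : 𝕜) = A.trace := hA.posSemidef.isHermitian.ofReal_re_trace
  have hBb : (b : 𝕜) = B.trace := hB.posSemidef.isHermitian.ofReal_re_trace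
  have hab : 0 < a * b := by
    have := re_trace_le_re_trace hQ
    rw [trace_kronecker, ← hAa, ← hBb, ← RCLike.ofReal_mul, RCLike.ofReal_re] at this
    exact hQ0.trans_le this
  have ha := pos_of_mul_pos_left hab (re_trace_nonneg hB)
  have hb := pos_of_mul_pos_right hab (re_trace_nonneg hA)
  refine ⟨a⁻¹ • A, b⁻¹ • B, (smul_nonneg (inv_nonneg.2 ha.le) hA).posSemidef, ?_,
    (smul_nonneg (inv_nonneg.2 hb.le) hB).posSemidef, ?_, hQ.trans_eq ?_⟩
  · rw [trace_smul, ← hAa, RCLike.real_smul_eq_coe_mul, ← RCLike.ofReal_mul,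
      inv_mul_cancel₀ ha.ne', RCLike.ofReal_one]
  · rw [trace_smul, ← hBb, RCLike.real_smul_eq_coe_mul, ← RCLike.ofReal_mul,
      inv_mul_cancel₀ hb.ne', RCLike.ofReal_one]
  · rw [smul_kronecker, kronecker_smul, smul_smul, smul_smul,
      show a * b * a⁻¹ * b⁻¹ = 1 by field_simp, one_smul]

variable {κ : Type*} [Fintype κ] [DecidableEq κ]

theorem exists_mul_conjTranspose_le_card_nsmul_sum_kronecker (x : κ → Matrix m m 𝕜)
    (y : κ → Matrix n n 𝕜) :
    ∃ (P : κ → Matrix m m 𝕜) (R : κ → Matrix n n 𝕜), (∀ k, 0 ≤ P k) ∧ (∀ k, 0 ≤ R k) ∧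
      (∑ k, x k ⊗ₖ y k) * (∑ k, x k ⊗ₖ y k)ᴴ ≤ Fintype.card κ • ∑ k, P k ⊗ₖ R k ∧
      ((∑ k, x k ⊗ₖ y k) * (∑ k, x k ⊗ₖ y k)ᴴ).trace = ∑ k, (P k).trace * (R k).trace := by
  obtain ⟨a, b, hab, horth⟩ :=
    exists_sum_kronecker_eq_and_pairwise_trace_mul_conjTranspose_eq_zero x y
  have hterm : ∀ k k', (a k ⊗ₖ b k) * (a k' ⊗ₖ b k')ᴴ = (a k * (a k')ᴴ) ⊗ₖ (b k * (b k')ᴴ) :=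
    fun k k' => by rw [conjTranspose_kronecker, mul_kronecker_mul]
  refine ⟨fun k => a k * (a k)ᴴ, fun k => b k * (b k)ᴴ,
    fun k => (posSemidef_self_mul_conjTranspose _).nonneg,
    fun k => (posSemidef_self_mul_conjTranspose _).nonneg, ?_, ?_⟩ <;> rw [← hab]
  · simpa only [star_eq_conjTranspose, hterm, card_univ] using
      (univ : Finset κ).sum_mul_star_sum_le_card_nsmul fun k => a k ⊗ₖ b k
  · simp only [conjTranspose_sum, Matrix.sum_mul, Matrix.mul_sum, hterm, trace_sum,
      trace_kronecker]
    refine sum_congr rfl fun k _ => Fintype.sum_eq_single k fun k' hk' => ?_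
    rw [horth hk', mul_zero]

variable {ι : Type*} [Fintype ι]

theorem exists_mul_separable_mul_conjTranspose_le (X : κ → Matrix m m 𝕜)
    (Y : κ → Matrix n n 𝕜) {p : ι → ℝ} (hp : ∀ i, 0 ≤ p i) {ρL : ι → Matrix m m 𝕜}
    {ρR : ι → Matrix n n 𝕜} (hρL : ∀ i, 0 ≤ ρL i) (hρR : ∀ i, 0 ≤ ρR i) :
    ∃ (P : ι × κ → Matrix m m 𝕜) (R : ι × κ → Matrix n n 𝕜), (∀ q, 0 ≤ P q) ∧ (∀ q, 0 ≤ R q) ∧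
      (∑ j, X j ⊗ₖ Y j) * (∑ i, p i • (ρL i ⊗ₖ ρR i)) * (∑ j, X j ⊗ₖ Y j)ᴴ ≤
        Fintype.card κ • ∑ q, p q.1 • (P q ⊗ₖ R q) ∧
      ((∑ j, X j ⊗ₖ Y j) * (∑ i, p i • (ρL i ⊗ₖ ρR i)) * (∑ j, X j ⊗ₖ Y j)ᴴ).trace =
        ∑ q, p q.1 • ((P q).trace * (R q).trace) := by
  set K := ∑ j, X j ⊗ₖ Y j
  choose sL hsL using fun i => exists_eq_mul_conjTranspose_of_nonneg (hρL i)
  choose sR hsR using fun i => exists_eq_mul_conjTranspose_of_nonneg (hρR i)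
  have hW : ∀ i, K * (ρL i ⊗ₖ ρR i) * Kᴴ = (∑ j, (X j * sL i) ⊗ₖ (Y j * sR i)) *
      (∑ j, (X j * sL i) ⊗ₖ (Y j * sR i))ᴴ := by
    intro i
    have hKs : ∑ j, (X j * sL i) ⊗ₖ (Y j * sR i) = K * (sL i ⊗ₖ sR i) := by
      simp only [K, Matrix.sum_mul, mul_kronecker_mul]
    rw [hKs, hsL, hsR, conjTranspose_mul, conjTranspose_kronecker, mul_kronecker_mul]
    simp only [Matrix.mul_assoc]
  choose P R hP hR hle htr using fun i =>
    exists_mul_conjTranspose_le_card_nsmul_sum_kronecker (fun j => X j * sL i)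
      (fun j => Y j * sR i)
  have hQ : K * (∑ i, p i • (ρL i ⊗ₖ ρR i)) * Kᴴ = ∑ i, p i • (K * (ρL i ⊗ₖ ρR i) * Kᴴ) := by
    simp only [Matrix.mul_sum, Matrix.sum_mul, Matrix.mul_smul, Matrix.smul_mul]
  refine ⟨fun q => P q.1 q.2, fun q => R q.1 q.2, fun q => hP _ _, fun q => hR _ _, ?_, ?_⟩ <;>
    rw [hQ, Fintype.sum_prod_type]
  · calc ∑ i, p i • (K * (ρL i ⊗ₖ ρR i) * Kᴴ)
        ≤ ∑ i, p i • (Fintype.card κ • ∑ k, P i k ⊗ₖ R i k) :=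
          sum_le_sum fun i _ => smul_le_smul_of_nonneg_left (hW i ▸ hle i) (hp i)
      _ = _ := by simp only [smul_sum, smul_comm (p _)]
  · simp only [trace_sum, trace_smul, hW, htr, smul_sum]

theorem exists_mul_separable_mul_conjTranspose_le_kronecker (X : κ → Matrix m m 𝕜)
    (Y : κ → Matrix n n 𝕜) {p : ι → ℝ} (hp : ∀ i, 0 ≤ p i) {ρL : ι → Matrix m m 𝕜}
    {ρR : ι → Matrix n n 𝕜} (hρL : ∀ i, 0 ≤ ρL i) (hρR : ∀ i, 0 ≤ ρR i) :
    ∃ A B, 0 ≤ A ∧ 0 ≤ B ∧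
      (∑ j, X j ⊗ₖ Y j) * (∑ i, p i • (ρL i ⊗ₖ ρR i)) * (∑ j, X j ⊗ₖ Y j)ᴴ ≤ A ⊗ₖ B ∧
      re A.trace * re B.trace ≤ Fintype.card ι * Fintype.card κ ^ 2 *
        re ((∑ j, X j ⊗ₖ Y j) * (∑ i, p i • (ρL i ⊗ₖ ρR i)) * (∑ j, X j ⊗ₖ Y j)ᴴ).trace := by
  obtain ⟨P, R, hP, hR, hQle, hQtr⟩ := exists_mul_separable_mul_conjTranspose_le X Y hp hρL hρR
  obtain ⟨A, B, hA, hB, hle, hAtr, hBtr⟩ :=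
    exists_sum_smul_kronecker_le_kronecker hP hR (w := fun q => p q.1) fun q => hp q.1
  refine ⟨(Fintype.card κ : ℝ) • A, B, smul_nonneg (Nat.cast_nonneg _) hA, hB, ?_, ?_⟩
  · rw [smul_kronecker, ← Nat.cast_smul_eq_nsmul ℝ] at *
    exact hQle.trans (smul_le_smul_of_nonneg_left hle (Nat.cast_nonneg _))
  have hre : re ((∑ j, X j ⊗ₖ Y j) * (∑ i, p i • (ρL i ⊗ₖ ρR i)) * (∑ j, X j ⊗ₖ Y j)ᴴ).trace =
      ∑ q, p q.1 * re (P q).trace * re (R q).trace := by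
    rw [hQtr, map_sum]
    refine sum_congr rfl fun q _ => ?_
    rw [RCLike.smul_re, ← (hP q).posSemidef.isHermitian.ofReal_re_trace,
      ← (hR q).posSemidef.isHermitian.ofReal_re_trace]
    simp only [← RCLike.ofReal_mul, RCLike.ofReal_re, mul_assoc]
  have hcs := sq_sum_le_card_mul_sum_sq (s := univ)
    (f := fun q : ι × κ => √(p q.1 * re (P q).trace * re (R q).trace))
  simp only [Real.sq_sqrt (mul_nonneg (mul_nonneg (hp _) (re_trace_nonneg (hP _)))
    (re_trace_nonneg (hR _))), card_univ, Fintype.card_prod] at hcs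
  rw [← hAtr, ← hre, Nat.cast_mul] at hcs
  rw [re_trace_smul, hBtr, ← hAtr]
  calc _ = (Fintype.card κ : ℝ) * re A.trace ^ 2 := by ring
    _ ≤ Fintype.card κ * (Fintype.card ι * Fintype.card κ * re ((∑ j, X j ⊗ₖ Y j) *
          (∑ i, p i • (ρL i ⊗ₖ ρR i)) * (∑ j, X j ⊗ₖ Y j)ᴴ).trace) := by gcongr
    _ = _ := by ring

end Matrix

theorem AGSP_bootstrap_general {l r : Type*} [Fintype l] [Fintype r]
    (D M : ℕ) (hD : 0 < D)
    (p : Fin D → ℝ) (hp : ∀ i, 0 ≤ p i)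
    (ρL : Fin D → Matrix l l ℂ) (ρR : Fin D → Matrix r r ℂ)
    (hρL : ∀ i, (ρL i).PosSemidef)
    (hρR : ∀ i, (ρR i).PosSemidef)
    (X : Fin M → Matrix l l ℂ) (Y : Fin M → Matrix r r ℂ)
    (K : Matrix (l × r) (l × r) ℂ) (hK : K = ∑ j, X j ⊗ₖ Y j)
    (ρ : Matrix (l × r) (l × r) ℂ) (hρ : ρ = ∑ i, p i • (ρL i ⊗ₖ ρR i))
    (htr : 0 < (K * ρ * Kᴴ).trace.re) :
    ∃ τL : Matrix l l ℂ, ∃ τR : Matrix r r ℂ,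
      τL.PosSemidef ∧ τL.trace = 1 ∧ τR.PosSemidef ∧ τR.trace = 1 ∧
      ((((D : ℝ) * M) ^ 2) • (τL ⊗ₖ τR) -
        ((K * ρ * Kᴴ).trace.re)⁻¹ • (K * ρ * Kᴴ)).PosSemidef := by
  subst hK hρ
  obtain ⟨A, B, hA, hB, hle, htrace⟩ := exists_mul_separable_mul_conjTranspose_le_kronecker X Y hp
    (fun i => (hρL i).nonneg) (fun i => (hρR i).nonneg)
  obtain ⟨τL, τR, hτL, hτLt, hτR, hτRt, hτ⟩ :=
    exists_le_smul_kronecker_of_le_kronecker hA hB hle htr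
  refine ⟨τL, τR, hτL, hτLt, hτR, hτRt, le_iff.mp ?_⟩
  simp only [Fintype.card_fin, RCLike.re_to_complex] at htrace hτ
  have hDM : (D : ℝ) * M ^ 2 ≤ ((D : ℝ) * M) ^ 2 := by
    have : (1 : ℝ) ≤ D := by exact_mod_cast hD
    nlinarith
  rw [inv_smul_le_iff_of_pos htr, smul_smul]
  refine hτ.trans (smul_le_smul_of_nonneg_right ?_ (kronecker_nonneg hτL.nonneg hτR.nonneg))
  exact htrace.trans (by nlinarith)

/-- if `K` has operator Schmidt rank (at most) `M`, i.e.
`K = Σ_{j=1}^M X_j ⊗ Y_j`, and `ρ = Σ_{i=1}^D p_i ρ_L^i ⊗ ρ_R^i` is a separable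
state with `Tr(KρKᴴ) > 0`, then `KρKᴴ/Tr(KρKᴴ) ⪯ (DM)² (τ_L ⊗ τ_R)` for some
states `τ_L, τ_R`. -/
theorem AGSP_bootstrap {l r : Type*} [Fintype l] [DecidableEq l]
    [Fintype r] [DecidableEq r]
    (D M : ℕ) (hD : 0 < D) (hM : 0 < M)
    (p : Fin D → ℝ) (hp : ∀ i, 0 ≤ p i) (hp1 : ∑ i, p i = 1)
    (ρL : Fin D → Matrix l l ℂ) (ρR : Fin D → Matrix r r ℂ)
    (hρL : ∀ i, (ρL i).PosSemidef) (hρLt : ∀ i, (ρL i).trace = 1)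
    (hρR : ∀ i, (ρR i).PosSemidef) (hρRt : ∀ i, (ρR i).trace = 1)
    (X : Fin M → Matrix l l ℂ) (Y : Fin M → Matrix r r ℂ)
    (K : Matrix (l × r) (l × r) ℂ) (hK : K = ∑ j, X j ⊗ₖ Y j)
    (ρ : Matrix (l × r) (l × r) ℂ) (hρ : ρ = ∑ i, p i • (ρL i ⊗ₖ ρR i))
    (htr : 0 < (K * ρ * Kᴴ).trace.re) :
    ∃ τL : Matrix l l ℂ, ∃ τR : Matrix r r ℂ,
      τL.PosSemidef ∧ τL.trace = 1 ∧ τR.PosSemidef ∧ τR.trace = 1 ∧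
      ((((D : ℝ) * M) ^ 2) • (τL ⊗ₖ τR) -
        ((K * ρ * Kᴴ).trace.re)⁻¹ • (K * ρ * Kᴴ)).PosSemidef :=
  AGSP_bootstrap_general D M hD p hp ρL ρR hρL hρR X Y K hK ρ hρ htr
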